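/- arXiv:math/0701570 — 3 statements merged into one kernel-verified Lean document; each statement's English description precedes it below -/
import Mathlib

section
/- Let P be a probability distribution on a finite abelian group G and let U be the uniform distribution on G. Then the squared total variation distance satisfies ‖P − U‖² ≤ (1/4) Σ_{χ ≠ 1} |P̂(χ)|², where the sum is over all non-trivial characters χ of G and P̂(χ) = Σ_{s∈G} P(s)χ(s). -/
/-!
The function `f = P - 1/|G|` has total mass zero, so its Fourier transform vanishes at the
trivial character and agrees with `P̂` at every other character. Cauchy–Schwarz gives
`(Σ |f|)² ≤ |G| Σ |f|²`, and Parseval turns `|G| Σ |f|²` into `Σ_χ |f̂(χ)|² = Σ_{χ ≠ 1} |P̂(χ)|²`.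
-/

open Finset

namespace AddChar

variable {G : Type*} [AddCommGroup G] [Fintype G]

theorem sum_sub_const_mul_of_ne_one {χ : AddChar G ℂ} (hχ : χ ≠ 1) (f : G → ℂ) (c : ℂ) :
    ∑ s, (f s - c) * χ s = ∑ s, f s * χ s := by
  simp only [sub_mul, sum_sub_distrib, ← mul_sum, sum_eq_zero_of_ne_one hχ, mul_zero, sub_zero]

variable [DecidableEq G]

theorem sum_transform_mul_conj (f : G → ℂ) :
    ∑ χ : AddChar G ℂ, (∑ s, f s * χ s) * starRingEnd ℂ (∑ t, f t * χ t) =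
      Fintype.card G * ∑ s, f s * starRingEnd ℂ (f s) := by
  have expand (χ : AddChar G ℂ) : (∑ s, f s * χ s) * starRingEnd ℂ (∑ t, f t * χ t) =
      ∑ s, ∑ t, f s * starRingEnd ℂ (f t) * χ (s - t) := by
    rw [map_sum, sum_mul_sum]
    refine sum_congr rfl fun s _ => sum_congr rfl fun t _ => ?_
    rw [map_mul, ← map_neg_eq_conj, sub_eq_add_neg, map_add_eq_mul]
    ring
  -- orthogonality: `Σ_χ χ (s - t)` is `|G|` on the diagonal and `0` off it
  calc ∑ χ : AddChar G ℂ, (∑ s, f s * χ s) * starRingEnd ℂ (∑ t, f t * χ t)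
      = ∑ s, ∑ t, f s * starRingEnd ℂ (f t) * ∑ χ : AddChar G ℂ, χ (s - t) := by
        simp only [expand, mul_sum]
        rw [sum_comm]
        exact sum_congr rfl fun s _ => sum_comm
    _ = Fintype.card G * ∑ s, f s * starRingEnd ℂ (f s) := by
        simp [sum_apply_eq_ite, sub_eq_zero, mul_sum, mul_comm]

theorem sum_norm_transform_sq (f : G → ℂ) :
    ∑ χ : AddChar G ℂ, ‖∑ s, f s * χ s‖ ^ 2 = Fintype.card G * ∑ s, ‖f s‖ ^ 2 := by
  have h := sum_transform_mul_conj f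
  simp only [Complex.mul_conj'] at h
  exact_mod_cast h

theorem sum_ne_one_norm_transform_sq {f : G → ℂ} (hf : ∑ s, f s = 0) :
    ∑ χ ∈ univ.filter (fun χ : AddChar G ℂ => χ ≠ 1), ‖∑ s, f s * χ s‖ ^ 2 =
      Fintype.card G * ∑ s, ‖f s‖ ^ 2 := by
  rw [filter_ne', sum_erase _ (by simp [hf]), sum_norm_transform_sq]

end AddChar

open AddChar in
theorem upper_bound_lemma_general (G : Type*) [AddCommGroup G] [Fintype G] [DecidableEq G]
    (P : G → ℝ) (hsum : ∑ s, P s = 1) :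
    ((1 / 2) * ∑ s, |P s - 1 / (Fintype.card G : ℝ)|) ^ 2 ≤
      (1 / 4) * ∑ χ ∈ Finset.univ.filter (fun χ : AddChar G ℂ => χ ≠ 1),
        (‖∑ s, (P s : ℂ) * χ s‖) ^ 2 := by
  set n : ℕ := Fintype.card G
  set f : G → ℂ := fun s => P s - 1 / n
  have norm_f (s : G) : ‖f s‖ = |P s - 1 / n| := by
    simpa [f] using Complex.norm_real (P s - 1 / n)
  have sum_f : ∑ s, f s = 0 := by
    simp only [f, sum_sub_distrib, ← Complex.ofReal_sum, hsum, sum_const, card_univ, nsmul_eq_mul]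
    field_simp [n, Fintype.card_ne_zero]
    simp [n]
  calc ((1 / 2) * ∑ s, |P s - 1 / (n : ℝ)|) ^ 2 = (1 / 4) * (∑ s, ‖f s‖) ^ 2 := by
        simp only [norm_f]; ring
    _ ≤ (1 / 4) * (n * ∑ s, ‖f s‖ ^ 2) := by gcongr; exact sq_sum_le_card_mul_sum_sq
    _ = (1 / 4) * ∑ χ ∈ univ.filter (fun χ : AddChar G ℂ => χ ≠ 1), ‖∑ s, f s * χ s‖ ^ 2 := by
        rw [sum_ne_one_norm_transform_sq sum_f]
    _ = _ := by
        congr 1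
        refine sum_congr rfl fun χ hχ => ?_
        rw [sum_sub_const_mul_of_ne_one (mem_filter.mp hχ).2]

/-- Diaconis–Shahshahani Upper Bound Lemma for a finite abelian group:
`‖P − U‖² ≤ (1/4) Σ_{χ ≠ 1} |P̂(χ)|²`, the sum over non-trivial characters of `G`. -/
theorem upper_bound_lemma (G : Type*) [AddCommGroup G] [Fintype G] [DecidableEq G]
    (P : G → ℝ) (hP : ∀ s, 0 ≤ P s) (hsum : ∑ s, P s = 1) :
    ((1 / 2) * ∑ s, |P s - 1 / (Fintype.card G : ℝ)|) ^ 2 ≤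
      (1 / 4) * ∑ χ ∈ Finset.univ.filter (fun χ : AddChar G ℂ => χ ≠ 1),
        (‖∑ s, (P s : ℂ) * χ s‖) ^ 2 :=
  upper_bound_lemma_general G P hsum
end

section
/- Let b ∈ ℂ with |b| > 1, let c ≥ 1, and let C₅ > 0. Suppose y = (y_1,…,y_c) ∈ ℂ^c satisfies: there is an index e ∈ {1,…,c} such that |y_{c−e+1}| ≥ C₅/p^{c−e} while |y_{c−j+1}| < C₅/p^{c−j} for all 1 ≤ j < e. Let J be the c×c Jordan block with eigenvalue b and set w = J^r y. Then |w_{c−e+1}| ≥ (C₅|b|^r / p^{c−1})·(1 − c·r^c/(|b|·p)). -/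
/-!
Write `J = b • 1 + N` with `N` the nilpotent upper shift. Since the two summands commute,
`(J ^ r y)_i = ∑ₖ (r choose k) b^(r-k) y_(i+k)`. At `i = c - e` the term `k = 0` has size at least
`|b|^r C₅ / p^(c-e)`, while for `1 ≤ k < e` the coordinate `y_(c-e+k)` lies among the small ones,
so each of the at most `c` remaining terms is at most `r^c |b|^(r-1) C₅ / p^(c-e+1)`; terms with
`k ≥ e` fall off the end of the vector. The triangle inequality gives the bound.
-/

open Matrix

/-- The `c × c` Jordan block with eigenvalue `b`. -/
def jordanBlock (c : ℕ) (b : ℂ) : Matrix (Fin c) (Fin c) ℂ :=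
  fun i j => if (i : ℕ) = j then b else if (j : ℕ) = (i : ℕ) + 1 then 1 else 0

open Finset

section Shift

variable {R : Type*} {c : ℕ}

def zeroExtend [Zero R] (v : Fin c → R) (n : ℕ) : R :=
  if h : n < c then v ⟨n, h⟩ else 0

lemma zeroExtend_of_lt [Zero R] (v : Fin c → R) {n : ℕ} (h : n < c) :
    zeroExtend v n = v ⟨n, h⟩ :=
  dif_pos h

lemma zeroExtend_of_le [Zero R] (v : Fin c → R) {n : ℕ} (h : c ≤ n) : zeroExtend v n = 0 :=
  dif_neg h.not_gt

variable (R c) in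
def upperShift [Zero R] [One R] : Matrix (Fin c) (Fin c) R :=
  of fun i j => if (j : ℕ) = i + 1 then 1 else 0

lemma upperShift_mulVec_apply [NonAssocSemiring R] (v : Fin c → R) (i : Fin c) :
    (upperShift R c *ᵥ v) i = zeroExtend v (i + 1) := by
  simp only [upperShift, mulVec, dotProduct, of_apply, ite_mul, one_mul, zero_mul]
  by_cases h : (i : ℕ) + 1 < c
  · rw [zeroExtend_of_lt v h, Fintype.sum_eq_single ⟨i + 1, h⟩ fun j hj =>
      if_neg fun h' => hj (Fin.ext h')]
    exact if_pos rfl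
  · rw [zeroExtend_of_le v (by omega)]
    exact sum_eq_zero fun j _ => if_neg (by omega)

lemma upperShift_pow_mulVec_apply [Semiring R] (k : ℕ) (v : Fin c → R) (i : Fin c) :
    (upperShift R c ^ k *ᵥ v) i = zeroExtend v (i + k) := by
  induction k generalizing i with
  | zero => simp [zeroExtend_of_lt v i.isLt]
  | succ k ih =>
    rw [pow_succ', ← mulVec_mulVec, upperShift_mulVec_apply]
    by_cases h : (i : ℕ) + 1 < c
    · rw [zeroExtend_of_lt _ h, ih, add_right_comm, add_assoc]
    · rw [zeroExtend_of_le _ (by omega), zeroExtend_of_le _ (by omega)]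

end Shift

lemma jordanBlock_eq_smul_one_add_upperShift (c : ℕ) (b : ℂ) :
    jordanBlock c b = b • 1 + upperShift ℂ c := by
  ext i j
  by_cases h : i = j
  · subst h; simp [jordanBlock, upperShift]
  · have : (i : ℕ) ≠ j := fun h' => h (Fin.ext h')
    simp [jordanBlock, upperShift, h, this]

lemma jordanBlock_pow_mulVec_apply (c : ℕ) (b : ℂ) (r : ℕ) (y : Fin c → ℂ) (i : Fin c) :
    (jordanBlock c b ^ r *ᵥ y) i =
      ∑ k ∈ range (r + 1), r.choose k * b ^ (r - k) * zeroExtend y (i + k) := by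
  have hcomm : Commute (upperShift ℂ c) (b • 1) := (Commute.one_right _).smul_right b
  rw [jordanBlock_eq_smul_one_add_upperShift, add_comm, hcomm.add_pow, sum_mulVec, Finset.sum_apply]
  refine sum_congr rfl fun k _ => ?_
  rw [smul_pow, one_pow, mul_smul_comm, mul_one, ← nsmul_eq_mul', smul_mulVec, smul_mulVec,
    Pi.smul_apply, Pi.smul_apply, upperShift_pow_mulVec_apply, nsmul_eq_mul, smul_eq_mul, mul_assoc]

lemma norm_sub_card_mul_le_norm_sum {ι E : Type*} [SeminormedAddCommGroup E] [DecidableEq ι]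
    {s : Finset ι} {f : ι → E} {a : ι} (ha : a ∈ s) {δ : ℝ}
    (hδ : ∀ k ∈ s, k ≠ a → ‖f k‖ ≤ δ) :
    ‖f a‖ - #(s.erase a) * δ ≤ ‖∑ k ∈ s, f k‖ := by
  rw [← add_sum_erase s f ha]
  calc ‖f a‖ - #(s.erase a) * δ
      ≤ ‖f a‖ - ∑ k ∈ s.erase a, ‖f k‖ := by
        rw [← nsmul_eq_mul]
        gcongr
        exact sum_le_card_nsmul _ _ _ fun k hk => hδ k (mem_of_mem_erase hk) (ne_of_mem_erase hk)
    _ ≤ ‖f a‖ - ‖∑ k ∈ s.erase a, f k‖ := by gcongr; exact norm_sum_le _ _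
    _ ≤ ‖f a + ∑ k ∈ s.erase a, f k‖ := norm_sub_le_norm_add _ _

lemma choose_mul_pow_sub_le {B : ℝ} (hB : 1 ≤ B) {r k c : ℕ} (hk : 1 ≤ k) (hkc : k ≤ c) :
    (r.choose k : ℝ) * B ^ (r - k) ≤ r ^ c * (B ^ r / B) := by
  obtain hrk | hkr := lt_or_ge r k
  · rw [Nat.choose_eq_zero_of_lt hrk, Nat.cast_zero, zero_mul]
    positivity
  have hchoose : (r.choose k : ℝ) ≤ r ^ c := by
    exact_mod_cast (r.choose_le_pow k).trans (Nat.pow_le_pow_right (by omega) hkc)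
  have hpow : B ^ (r - k) ≤ B ^ r / B := by
    rw [le_div_iff₀ (by positivity), ← pow_succ]
    exact pow_le_pow_right₀ hB (by omega)
  gcongr

lemma le_norm_jordanBlock_pow_mulVec_apply {c : ℕ} {b : ℂ} (hb : 1 ≤ ‖b‖) (r : ℕ)
    {y : Fin c → ℂ} {i : Fin c} {A δ : ℝ} (hA : A ≤ ‖y i‖) (hδ0 : 0 ≤ δ)
    (hδ : ∀ j, i < j → ‖y j‖ ≤ δ) :
    ‖b‖ ^ r * A - c * (r ^ c * (‖b‖ ^ r / ‖b‖) * δ) ≤ ‖(jordanBlock c b ^ r *ᵥ y) i‖ := by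
  set t : ℕ → ℂ := fun k => r.choose k * b ^ (r - k) * zeroExtend y (i + k)
  set s := range (min (r + 1) (c - i))
  have hsum : (jordanBlock c b ^ r *ᵥ y) i = ∑ k ∈ s, t k := by
    rw [jordanBlock_pow_mulVec_apply]
    refine (sum_subset (range_subset_range.2 (min_le_left _ _)) fun k hk hk' => ?_).symm
    simp only [mem_range, lt_min_iff, not_and_or, not_lt] at hk hk'
    simp only [zeroExtend_of_le y (by omega : c ≤ i + k), mul_zero]
  have hlead : ‖b‖ ^ r * A ≤ ‖t 0‖ := by
    simp only [t, Nat.choose_zero_right, Nat.cast_one, one_mul, Nat.sub_zero, add_zero,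
      zeroExtend_of_lt y i.isLt, norm_mul, norm_pow]
    gcongr
  have htail : ∀ k ∈ s, k ≠ 0 → ‖t k‖ ≤ r ^ c * (‖b‖ ^ r / ‖b‖) * δ := by
    intro k hk hk0
    simp only [s, mem_range, lt_min_iff] at hk
    have hy : ‖zeroExtend y (i + k)‖ ≤ δ := by
      rw [zeroExtend_of_lt y (by omega)]
      exact hδ _ (Fin.lt_def.2 (by simp only; omega))
    calc ‖t k‖ = r.choose k * ‖b‖ ^ (r - k) * ‖zeroExtend y (i + k)‖ := by
          simp only [t, norm_mul, norm_pow, Complex.norm_natCast]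
      _ ≤ r ^ c * (‖b‖ ^ r / ‖b‖) * δ :=
          mul_le_mul (choose_mul_pow_sub_le hb (by omega) (by omega)) hy (norm_nonneg _)
            (by positivity)
  have hcard : #(s.erase 0) ≤ c := by
    rw [card_erase_of_mem (by simp [s]), card_range]
    omega
  calc ‖b‖ ^ r * A - c * (r ^ c * (‖b‖ ^ r / ‖b‖) * δ)
      ≤ ‖t 0‖ - #(s.erase 0) * (r ^ c * (‖b‖ ^ r / ‖b‖) * δ) := by
        gcongr
    _ ≤ ‖(jordanBlock c b ^ r *ᵥ y) i‖ :=
        hsum ▸ norm_sub_card_mul_le_norm_sum (by simp [s]) htail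

/-- If `e` is the first index (in the order `y_c, y_{c-1}, …, y_1`) with
`|y_{c-e+1}| ≥ C₅/p^{c-e}`, then for `w = J^r y`,
`|w_{c-e+1}| ≥ (C₅ |b|^r / p^{c-1})(1 − c r^c/(|b| p))`. -/
theorem jordan_pow_large_eigenvalue_coord (c : ℕ) (b : ℂ)
    (hb : 1 < ‖b‖) (C₅ : ℝ) (hC₅ : 0 < C₅) (p : ℕ) (hp : 2 ≤ p)
    (r : ℕ) (y : Fin c → ℂ) (e : ℕ) (he1 : 1 ≤ e) (hec : e ≤ c)
    (hbig : C₅ / (p : ℝ) ^ (c - e) ≤ ‖y ⟨c - e, by omega⟩‖)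
    (hsmall : ∀ (j : ℕ) (_hj1 : 1 ≤ j) (_hj2 : j < e),
      ‖y ⟨c - j, by omega⟩‖ < C₅ / (p : ℝ) ^ (c - j)) :
    (C₅ * (‖b‖) ^ r / (p : ℝ) ^ (c - 1)) *
        (1 - c * (r : ℝ) ^ c / (‖b‖ * p)) ≤
      ‖((jordanBlock c b) ^ r).mulVec y ⟨c - e, by omega⟩‖ := by
  have hp1 : (1 : ℝ) ≤ p := by exact_mod_cast (by omega : 1 ≤ p)
  obtain hε | hε := le_or_gt (1 - c * (r : ℝ) ^ c / (‖b‖ * p)) 0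
  · exact (mul_nonpos_of_nonneg_of_nonpos (by positivity) hε).trans (norm_nonneg _)
  have hlater : ∀ j, (⟨c - e, by omega⟩ : Fin c) < j → ‖y j‖ ≤ C₅ / (p : ℝ) ^ (c - e + 1) := by
    intro j hj
    replace hj : c - e < j := hj
    have hj' := hsmall (c - j) (by omega) (by omega)
    simp only [Nat.sub_sub_self j.isLt.le, Fin.eta] at hj'
    exact hj'.le.trans (by gcongr; omega)
  calc (C₅ * ‖b‖ ^ r / (p : ℝ) ^ (c - 1)) * (1 - c * (r : ℝ) ^ c / (‖b‖ * p))
      ≤ (C₅ * ‖b‖ ^ r / (p : ℝ) ^ (c - e)) * (1 - c * (r : ℝ) ^ c / (‖b‖ * p)) := by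
        gcongr
    _ = ‖b‖ ^ r * (C₅ / (p : ℝ) ^ (c - e))
          - c * (r ^ c * (‖b‖ ^ r / ‖b‖) * (C₅ / (p : ℝ) ^ (c - e + 1))) := by
        field_simp
        ring
    _ ≤ _ := le_norm_jordanBlock_pow_mulVec_apply hb.le r hbig (by positivity) hlater
end

section
/- Consider the process X_{n+1} = T X_n + B_n mod p with X_0 = 0 and B_n i.i.d. uniform on {0, e_1,…,e_d}, where T is a d×d integer matrix having a complex eigenvalue that is a root of unity. Then there exists b with 0 < b ≤ 2, not depending on p, such that for every ε > 0, if n ≤ p^b then ‖P_n − U‖ ≥ 1 − ε for all sufficiently large primes p; in particular ‖P_n − U‖ → 1 as p → ∞ through primes when n ≤ p^b. -/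
open Finset Matrix

/-- The step distribution on `(ℤ/pℤ)^d`: mass `1/(d+1)` on each of `0, e_1, …, e_d`. -/
noncomputable def stepDist (p d : ℕ) (v : Fin d → ZMod p) : ℝ :=
  ((if v = 0 then (1 : ℝ) else 0) +
    ((Finset.univ.filter fun k : Fin d => Pi.single k (1 : ZMod p) = v).card : ℝ)) / (d + 1)

/-- The distribution of `X_n` for the process `X_{n+1} = T X_n + B_n (mod p)`, `X_0 = 0`,
with `B_n` i.i.d. with distribution `stepDist`. -/
noncomputable def affineDist (p d : ℕ) [NeZero p] (T : Matrix (Fin d) (Fin d) ℤ) :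
    ℕ → (Fin d → ZMod p) → ℝ
  | 0 => fun v => if v = 0 then 1 else 0
  | n + 1 => fun v => ∑ y : Fin d → ZMod p,
      affineDist p d T n y *
        stepDist p d (v - (T.map (Int.cast : ℤ → ZMod p)).mulVec y)

/-- The Fourier transform of a distribution `f` on `(ℤ/pℤ)^d` at the character indexed by `c`. -/
noncomputable def fourierT (p d : ℕ) [NeZero p] (f : (Fin d → ZMod p) → ℝ)
    (c : Fin d → ZMod p) : ℂ :=
  ∑ s : Fin d → ZMod p,
    (f s : ℂ) * Complex.exp (2 * Real.pi * Complex.I * ((∑ i, s i * c i).val : ℕ) / p)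

/-- Total variation distance of a distribution `f` on `(ℤ/pℤ)^d` from the uniform distribution. -/
noncomputable def tvU (p d : ℕ) [NeZero p] (f : (Fin d → ZMod p) → ℝ) : ℝ :=
  (1 / 2) * ∑ s : Fin d → ZMod p, |f s - 1 / (p : ℝ) ^ d|

/-!
An eigenvalue `λ` of `T` with `λ ^ m = 1` yields a nonzero integer vector `w` with
`w T^m = w`, so the orbit `w T^k` is bounded, say by `M`. Since
`⟨w T^k, T y + e_j⟩ = ⟨w T^(k+1), y⟩ + (w T^k)_j`, induction on `n` shows that `⟨w, X_n⟩` is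
congruent mod `p` to an integer of absolute value at most `n M`. So `X_n` lives on at most
`2 n M + 1` affine hyperplanes, i.e. on at most `(2 n M + 1) p^(d-1)` points, and its total
variation distance from uniform is at least `1 - (2 n M + 1) / p`, which tends to `1` for
`n ≤ √p`.
-/

theorem sum_stepDist (p d : ℕ) [NeZero p] : ∑ v : Fin d → ZMod p, stepDist p d v = 1 := by
  have hsingle : ∑ v : Fin d → ZMod p,
      (#{k : Fin d | Pi.single k (1 : ZMod p) = v} : ℝ) = d := by
    rw [← Nat.cast_sum, ← card_eq_sum_card_fiberwise (fun _ _ => mem_univ _), card_univ,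
      Fintype.card_fin]
  unfold stepDist
  rw [← sum_div, sum_add_distrib, hsingle, Fintype.sum_ite_eq', add_comm, div_self]
  positivity

theorem sum_affineDist (p d : ℕ) [NeZero p] (T : Matrix (Fin d) (Fin d) ℤ) (n : ℕ) :
    ∑ v, affineDist p d T n v = 1 := by
  induction n with
  | zero => simp [affineDist]
  | succ n ih =>
    have hstep (c : Fin d → ZMod p) : ∑ v, stepDist p d (v - c) = 1 :=
      ((Equiv.subRight c).sum_comp _).trans (sum_stepDist p d)
    simp only [affineDist]
    rw [sum_comm]
    simp only [← mul_sum, hstep, mul_one, ih]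

theorem stepDist_ne_zero {p d : ℕ} {v : Fin d → ZMod p} (h : stepDist p d v ≠ 0) :
    v = 0 ∨ ∃ k, Pi.single k 1 = v := by
  contrapose! h
  simp [stepDist, h.1, h.2]

theorem one_sub_card_support_div_le {α : Type*} [Fintype α] (f : α → ℝ) (hf : ∑ a, f a = 1) :
    1 - #{a | f a ≠ 0} / (Fintype.card α : ℝ) ≤
      1 / 2 * ∑ a, |f a - 1 / Fintype.card α| := by
  set u : ℝ := 1 / Fintype.card α
  have hα : Nonempty α := by
    by_contra h
    simp [not_nonempty_iff.mp h] at hf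
  have hcard : (Fintype.card α : ℝ) * u = 1 := mul_one_div_cancel (by positivity)
  -- off the support `|f a - u| = u` exceeds `f a - u` by `2u`
  have hpt (a : α) : f a - u + (if f a = 0 then 2 * u else 0) ≤ |f a - u| := by
    split_ifs with ha
    · rw [ha, zero_sub, abs_neg, abs_of_nonneg (by positivity)]; linarith
    · simpa using le_abs_self (f a - u)
  have hzeros : (#{a | f a = 0} : ℝ) = Fintype.card α - #{a | f a ≠ 0} := by
    rw [eq_sub_iff_add_eq, ← Nat.cast_add, card_filter_add_card_filter_not, card_univ]
  have hsum := sum_le_sum fun a (_ : a ∈ univ) => hpt a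
  rw [sum_add_distrib, sum_sub_distrib, hf, sum_const, card_univ, nsmul_eq_mul, hcard,
    sum_ite, sum_const_zero, sum_const, nsmul_eq_mul, hzeros] at hsum
  rw [div_eq_mul_one_div]
  nlinarith

theorem card_filter_dotProduct_mem_le {K ι : Type*} [Field K] [Fintype K] [DecidableEq K]
    [Fintype ι] [DecidableEq ι] {u : ι → K} {i₀ : ι} (hu : u i₀ ≠ 0) (S : Finset K) :
    #{v : ι → K | u ⬝ᵥ v ∈ S} ≤ #S * Fintype.card K ^ (Fintype.card ι - 1) := by
  -- `v` is recovered from `u ⬝ᵥ v` and its coordinates off `i₀`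
  have hinj : Function.Injective fun v : ι → K => (u ⬝ᵥ v, fun j : {j // j ≠ i₀} => v j) := by
    intro v v' h
    simp only [Prod.mk.injEq, funext_iff, Subtype.forall] at h
    have hdiff : v - v' = Pi.single i₀ ((v - v') i₀) := by
      funext j
      by_cases hj : j = i₀
      · subst hj; simp
      · simp [hj, h.2 j hj]
    have h0 : u i₀ * (v - v') i₀ = 0 := by
      rw [← dotProduct_single, ← hdiff, dotProduct_sub, h.1, sub_self]
    rw [← sub_eq_zero, hdiff, (mul_eq_zero.mp h0).resolve_left hu, Pi.single_zero]
  calc #{v : ι → K | u ⬝ᵥ v ∈ S}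
      ≤ #(S ×ˢ (univ : Finset ({j // j ≠ i₀} → K))) :=
        card_le_card_of_injOn _ (fun v hv => by simpa using hv) hinj.injOn
    _ = #S * Fintype.card K ^ (Fintype.card ι - 1) := by
        simp [card_product, Fintype.card_subtype_compl]

theorem exists_ne_zero_vecMul_pow_eq_self {ι : Type*} [Fintype ι] [DecidableEq ι]
    {T : Matrix ι ι ℤ} {m : ℕ} {lam : ℂ} (hlam : lam ^ m = 1)
    (hroot : (T.map (Int.cast : ℤ → ℂ)).charpoly.IsRoot lam) :
    ∃ w : ι → ℤ, w ≠ 0 ∧ w ᵥ* T ^ m = w := by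
  have hspec : (1 : ℂ) ∈ spectrum ℂ ((T ^ m).map (Int.castRingHom ℂ)) := by
    rw [Matrix.map_pow, ← hlam]
    exact spectrum.pow_mem_pow _ m (Matrix.mem_spectrum_iff_isRoot_charpoly.mpr hroot)
  have hdet : (scalar ι 1 - T ^ m).det = 0 := by
    rwa [Matrix.mem_spectrum_iff_isRoot_charpoly, charpoly_map, Polynomial.IsRoot,
      Polynomial.eval_map, Polynomial.eval₂_at_one, eq_intCast, Int.cast_eq_zero,
      eval_charpoly] at hspec
  obtain ⟨w, hw0, hw⟩ := exists_vecMul_eq_zero_iff.mpr hdet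
  refine ⟨w, hw0, ?_⟩
  rwa [scalar_apply, diagonal_one, vecMul_sub, vecMul_one, sub_eq_zero, eq_comm] at hw

theorem exists_abs_vecMul_pow_le {ι : Type*} [Fintype ι] [DecidableEq ι] {T : Matrix ι ι ℤ}
    {w : ι → ℤ} {m : ℕ} (hm : m ≠ 0) (hw : w ᵥ* T ^ m = w) :
    ∃ M : ℕ, ∀ k i, |(w ᵥ* T ^ k) i| ≤ M := by
  have hper : Function.Periodic (fun k => w ᵥ* T ^ k) m := fun k => by
    simp only [add_comm k, pow_add, ← vecMul_vecMul, hw]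
  obtain ⟨M, hM⟩ := (Set.finite_range fun x : Fin m × ι =>
    ((w ᵥ* T ^ (x.1 : ℕ)) x.2).natAbs).bddAbove
  refine ⟨M, fun k i => ?_⟩
  rw [← hper.map_mod_nat, Int.abs_eq_natAbs, Nat.cast_le]
  exact hM ⟨(⟨k % m, Nat.mod_lt _ (Nat.pos_of_ne_zero hm)⟩, i), rfl⟩

theorem intCast_dotProduct_mulVec {R ι : Type*} [Ring R] [Fintype ι] (u : ι → ℤ)
    (T : Matrix ι ι ℤ) (y : ι → R) :
    (Int.cast ∘ u) ⬝ᵥ (T.map (Int.cast : ℤ → R) *ᵥ y) = (Int.cast ∘ (u ᵥ* T)) ⬝ᵥ y := by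
  rw [dotProduct_mulVec]
  congr 1
  funext j
  exact ((Int.castRingHom R).map_vecMul T u j).symm

theorem exists_intCast_dotProduct_eq_of_affineDist_ne_zero {p d : ℕ} [NeZero p]
    {T : Matrix (Fin d) (Fin d) ℤ} {w : Fin d → ℤ} {M : ℕ}
    (hM : ∀ k i, |(w ᵥ* T ^ k) i| ≤ M) (n : ℕ) {v : Fin d → ZMod p}
    (hv : affineDist p d T n v ≠ 0) (k : ℕ) :
    ∃ z : ℤ, |z| ≤ n * M ∧ (Int.cast ∘ (w ᵥ* T ^ k)) ⬝ᵥ v = z := by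
  induction n generalizing v k with
  | zero =>
    obtain rfl : v = 0 := by by_contra h; simp [affineDist, h] at hv
    exact ⟨0, by simp, by simp⟩
  | succ n ih =>
    obtain ⟨y, -, hy⟩ := exists_ne_zero_of_sum_ne_zero hv
    obtain ⟨z, hz, hzy⟩ := ih (left_ne_zero_of_mul hy) (k + 1)
    have hTy : (Int.cast ∘ (w ᵥ* T ^ k)) ⬝ᵥ (T.map (Int.cast : ℤ → ZMod p) *ᵥ y) = z := by
      rwa [intCast_dotProduct_mulVec, vecMul_vecMul, ← pow_succ]
    rcases stepDist_ne_zero (right_ne_zero_of_mul hy) with hstep | ⟨j, hstep⟩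
    · rw [sub_eq_zero] at hstep
      refine ⟨z, hz.trans ?_, hstep ▸ hTy⟩
      gcongr
      omega
    · rw [eq_sub_iff_add_eq'] at hstep
      refine ⟨z + (w ᵥ* T ^ k) j, ?_, ?_⟩
      · calc |z + (w ᵥ* T ^ k) j| ≤ |z| + |(w ᵥ* T ^ k) j| := abs_add_le _ _
          _ ≤ n * M + M := add_le_add hz (hM k j)
          _ = (n + 1 : ℕ) * M := by push_cast; ring
      · rw [← hstep, dotProduct_add, hTy, dotProduct_single, mul_one]
        push_cast
        rfl

theorem card_support_affineDist_le {p d : ℕ} [Fact p.Prime] {T : Matrix (Fin d) (Fin d) ℤ}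
    {w : Fin d → ℤ} {i₀ : Fin d} (hw : (w i₀ : ZMod p) ≠ 0) {M : ℕ}
    (hM : ∀ k i, |(w ᵥ* T ^ k) i| ≤ M) (n : ℕ) :
    #{v | affineDist p d T n v ≠ 0} ≤ (2 * n * M + 1) * p ^ (d - 1) := by
  set S : Finset (ZMod p) := (Icc (-(n * M : ℤ)) (n * M)).image Int.cast
  have hsupp : ({v | affineDist p d T n v ≠ 0} : Finset (Fin d → ZMod p)) ⊆
      ({v | (Int.cast ∘ w : Fin d → ZMod p) ⬝ᵥ v ∈ S} : Finset _) := by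
    intro v hv
    obtain ⟨z, hz, hzv⟩ := exists_intCast_dotProduct_eq_of_affineDist_ne_zero hM n
      (mem_filter.mp hv).2 0
    rw [pow_zero, vecMul_one] at hzv
    simpa [S, hzv] using ⟨z, abs_le.mp hz, rfl⟩
  have hS : #S ≤ 2 * n * M + 1 := by
    refine card_image_le.trans ?_
    rw [Int.card_Icc, show (n * M : ℤ) + 1 - -(n * M) = ((2 * n * M + 1 : ℕ) : ℤ) by
      push_cast; ring, Int.toNat_natCast]
  calc #{v | affineDist p d T n v ≠ 0}
      ≤ #S * Fintype.card (ZMod p) ^ (Fintype.card (Fin d) - 1) :=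
        (card_le_card hsupp).trans (card_filter_dotProduct_mem_le (u := Int.cast ∘ w) hw S)
    _ ≤ (2 * n * M + 1) * p ^ (d - 1) := by
        rw [ZMod.card, Fintype.card_fin]
        gcongr

theorem one_sub_div_le_tvU_affineDist {p d : ℕ} [NeZero p] [Fact p.Prime]
    {T : Matrix (Fin d) (Fin d) ℤ} {w : Fin d → ℤ} {i₀ : Fin d} (hw : (w i₀ : ZMod p) ≠ 0)
    {M : ℕ} (hM : ∀ k i, |(w ᵥ* T ^ k) i| ≤ M) (n : ℕ) :
    1 - (2 * n * M + 1) / p ≤ tvU p d (affineDist p d T n) := by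
  have htv := one_sub_card_support_div_le _ (sum_affineDist p d T n)
  rw [Fintype.card_fun, ZMod.card, Fintype.card_fin, Nat.cast_pow] at htv
  refine le_trans ?_ htv
  have hsupp : (#{v | affineDist p d T n v ≠ 0} : ℝ) ≤ (2 * n * M + 1) * p ^ (d - 1) := by
    exact_mod_cast card_support_affineDist_le hw hM n
  have hp : (0 : ℝ) < p := by exact_mod_cast (Fact.out : p.Prime).pos
  have hpow : (p : ℝ) ^ d = p ^ (d - 1) * p := by
    rw [← pow_succ, Nat.sub_add_cancel (Fin.pos i₀)]
  rw [sub_le_sub_iff_left, div_le_div_iff₀ (by positivity) hp, hpow, ← mul_assoc]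
  gcongr

theorem two_mul_mul_add_one_div_le_of_le_sqrt {M n p ε : ℝ} (hM : 0 ≤ M) (hε : 0 < ε)
    (hp : 1 ≤ p) (hpε : ((2 * M + 1) / ε) ^ 2 ≤ p) (hn : n ≤ √p) : (2 * n * M + 1) / p ≤ ε := by
  have hs1 : 1 ≤ √p := Real.one_le_sqrt.mpr hp
  have hsε : 2 * M + 1 ≤ ε * √p := by
    rw [← div_le_iff₀' hε]
    exact Real.le_sqrt_of_sq_le hpε
  rw [div_le_iff₀ (by positivity), ← Real.mul_self_sqrt (by positivity : (0 : ℝ) ≤ p)]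
  nlinarith

theorem main_lower_bound_general (d : ℕ) (T : Matrix (Fin d) (Fin d) ℤ)
    (heig : ∃ m : ℕ, 1 ≤ m ∧ ∃ lam : ℂ, lam ^ m = 1 ∧
      (T.map (Int.cast : ℤ → ℂ)).charpoly.IsRoot lam) :
    ∃ b : ℝ, 0 < b ∧ b ≤ 2 ∧ ∀ ε > (0 : ℝ), ∃ N : ℕ, ∀ (p : ℕ) [NeZero p], N ≤ p →
      p.Prime → ∀ n : ℕ, (n : ℝ) ≤ (p : ℝ) ^ b →
        1 - ε ≤ tvU p d (affineDist p d T n) := by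
  obtain ⟨m, hm, lam, hlam, hroot⟩ := heig
  obtain ⟨w, hw0, hwT⟩ := exists_ne_zero_vecMul_pow_eq_self hlam hroot
  obtain ⟨i₀, hi₀⟩ := Function.ne_iff.mp hw0
  obtain ⟨M, hM⟩ := exists_abs_vecMul_pow_le (by omega) hwT
  refine ⟨1 / 2, by norm_num, by norm_num, fun ε hε => ?_⟩
  refine ⟨(w i₀).natAbs + ⌈((2 * M + 1) / ε) ^ 2⌉₊ + 1, fun p _ hNp hp n hn => ?_⟩
  have : Fact p.Prime := ⟨hp⟩
  have hw : (w i₀ : ZMod p) ≠ 0 := by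
    rw [Ne, ZMod.intCast_zmod_eq_zero_iff_dvd]
    exact fun h => hi₀ (Int.eq_zero_of_dvd_of_natAbs_lt_natAbs h (by simp; omega))
  have hpε : ((2 * M + 1) / ε) ^ 2 ≤ (p : ℝ) :=
    (Nat.le_ceil _).trans (by exact_mod_cast (by omega : ⌈((2 * M + 1) / ε) ^ 2⌉₊ ≤ p))
  have hn' : (n : ℝ) ≤ √p := by rwa [Real.sqrt_eq_rpow]
  have hdiv := two_mul_mul_add_one_div_le_of_le_sqrt M.cast_nonneg hε
    (by exact_mod_cast hp.one_le) hpε hn'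
  linarith [one_sub_div_le_tvU_affineDist hw hM n]

/-- Theorem 2: if `T` has a complex eigenvalue which is a root of unity, then there is
`b ∈ (0, 2]` such that for every `ε > 0`, whenever `n ≤ p^b`, the total variation distance
of `X_n` from uniform is at least `1 − ε` for all sufficiently large primes `p`. -/
theorem main_lower_bound (d : ℕ) (hd : 1 ≤ d) (T : Matrix (Fin d) (Fin d) ℤ)
    (hdet : T.det ≠ 0)
    (heig : ∃ m : ℕ, 1 ≤ m ∧ ∃ lam : ℂ, lam ^ m = 1 ∧
      (T.map (Int.cast : ℤ → ℂ)).charpoly.IsRoot lam) :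
    ∃ b : ℝ, 0 < b ∧ b ≤ 2 ∧ ∀ ε > (0 : ℝ), ∃ N : ℕ, ∀ (p : ℕ) [NeZero p], N ≤ p →
      p.Prime → ∀ n : ℕ, (n : ℝ) ≤ (p : ℝ) ^ b →
        1 - ε ≤ tvU p d (affineDist p d T n) :=
  main_lower_bound_general d T heig
end
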